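/- arXiv:2602.12220 — 2 statements merged into one kernel-verified Lean document; each statement's English description precedes it below -/
import Mathlib

section
/- Let K = 2m ≥ 4 and t̄ = 2r be even natural numbers with 1 ≤ r and 2r ≤ m, and set t = 2m − 2r. Define F_i = 2^{2(i−1)} · C(m, 2(i−1)) · C(m − 2(i−1), r − i + 1) for 1 ≤ i ≤ r + 1, and define α_1 = 0 and α_i = (∏_{k=1}^{i−1}(2k−1)) · (∏_{k=i−1}^{r−1} 2k) for 2 ≤ i ≤ r + 1 (empty products equal 1). Then min{ ∑_{i=1}^{r+1} α_i · F_i , t · (C(2m, 2r) − C(m, r)) } ≤ min{ ∏_{k=1}^{r}(2k−1) , t } · C(2m, 2r). In particular, the subpacketization F_PT of the PT design (the smaller of the two displayed quantities) satisfies F_PT ≤ F_JCM and F_PT / F_JCM ≤ min{ (1/t) ∏_{i=1}^{t̄/2}(2i−1), 1 }, where F_JCM = t · C(K, t). -/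
/-!
Split the `2m` users into `m` pairs. A `2r`-subset of users that meets `b` pairs takes both users
of `2r - b` of them and one user of the remaining `2b - 2r`; writing `b = r + j`, this counts
`C(2m, 2r) = ∑ⱼ 4ʲ C(m, 2j) C(m - 2j, r - j) = ∑ᵢ Fᵢ`. Algebraically this is the coefficient of
`X^(2r)` in `(X + 1)^(2m) = (1 + X (X + 2))^m`.

Each `αᵢ` is at most `∏_{k=1}^{r} (2k - 1)`: the even factors `2k`, `i - 1 ≤ k ≤ r - 1`, are
dominated one by one by the missing odd factors `2(k + 1) - 1`. Hence `∑ αᵢ Fᵢ ≤ ∏ (2k - 1) · C(2m, 2r)`,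
while `t (C(2m, 2r) - C(m, r)) ≤ t · C(2m, 2r)` is immediate.
-/

open Finset Polynomial

theorem Polynomial.coeff_X_pow_mul_X_add_C_pow {R : Type*} [Semiring R] (c : R) (b n : ℕ) :
    ((X : R[X]) ^ b * (X + C c) ^ b).coeff n =
      if b ≤ n then c ^ (2 * b - n) * b.choose (n - b) else 0 := by
  rw [coeff_X_pow_mul']
  split_ifs
  · rw [coeff_X_add_C_pow, show b - (n - b) = 2 * b - n by omega]
  · rfl

theorem Nat.choose_two_mul_eq_sum (m n : ℕ) :
    (2 * m).choose n = ∑ b ∈ range (n + 1), 2 ^ (2 * b - n) * b.choose (n - b) * m.choose b := by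
  set g : ℕ → ℕ := fun b => m.choose b * if b ≤ n then 2 ^ (2 * b - n) * b.choose (n - b) else 0
  have hsq : (X + 1 : ℕ[X]) ^ (2 * m) = (X * (X + C 2) + 1) ^ m := by
    rw [pow_mul]; congr 1; simp only [C_ofNat]; ring
  have hcoeff : (2 * m).choose n = ∑ b ∈ range (m + 1), g b := by
    rw [← Nat.cast_id ((2 * m).choose n), ← coeff_X_add_one_pow, hsq, add_pow, finsetSum_coeff]
    refine sum_congr rfl fun b _ => ?_
    rw [one_pow, mul_one, mul_pow, ← C_eq_natCast, coeff_mul_C, coeff_X_pow_mul_X_add_C_pow,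
      mul_comm]
    simp only [Nat.cast_id, g]
  calc (2 * m).choose n = ∑ b ∈ range (m + 1), g b := hcoeff
    _ = ∑ b ∈ range (m + n + 1), g b :=
      sum_subset (range_subset_range.2 (by omega)) fun b _ hb => by
        simp only [mem_range, not_lt] at hb
        simp [g, Nat.choose_eq_zero_of_lt (show m < b by omega)]
    _ = ∑ b ∈ range (n + 1), g b :=
      (sum_subset (range_subset_range.2 (by omega)) fun b _ hb => by
        simp only [mem_range, not_lt] at hb
        simp [g, show ¬ b ≤ n by omega]).symm
    _ = _ := sum_congr rfl fun b hb => by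
        simp only [g]
        rw [if_pos (mem_range_succ_iff.1 hb)]
        ring

theorem Nat.choose_two_mul_two_mul_eq_sum (m r : ℕ) :
    (2 * m).choose (2 * r) =
      ∑ j ∈ range (r + 1), 2 ^ (2 * j) * m.choose (2 * j) * (m - 2 * j).choose (r - j) := by
  set f : ℕ → ℕ := fun b => 2 ^ (2 * b - 2 * r) * b.choose (2 * r - b) * m.choose b
  have hlow : ∑ b ∈ range r, f b = 0 :=
    sum_eq_zero fun b hb => by
      simp [f, Nat.choose_eq_zero_of_lt (show b < 2 * r - b by have := mem_range.1 hb; omega)]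
  rw [Nat.choose_two_mul_eq_sum, ← sum_range_add_sum_Ico _ (by omega : r ≤ 2 * r + 1), hlow,
    zero_add, sum_Ico_eq_sum_range, show 2 * r + 1 - r = r + 1 by omega]
  refine sum_congr rfl fun j hj => ?_
  have hj : j ≤ r := mem_range_succ_iff.1 hj
  have hsymm : (r + j).choose (r - j) = (r + j).choose (2 * j) := by
    rw [← Nat.choose_symm (by omega : 2 * j ≤ r + j), show r + j - 2 * j = r - j by omega]
  rw [show 2 * (r + j) - 2 * r = 2 * j by omega, show 2 * r - (r + j) = r - j by omega, hsymm,
    mul_assoc, mul_comm ((r + j).choose _), Nat.choose_mul (by omega : 2 * j ≤ r + j),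
    show r + j - 2 * j = r - j by omega, mul_assoc]

theorem prod_Icc_two_mul_le (a b : ℕ) :
    ∏ k ∈ Icc a b, 2 * k ≤ ∏ k ∈ Icc (a + 1) (b + 1), (2 * k - 1) := by
  rw [← image_add_right_Icc, prod_image fun _ _ _ _ h => by simpa using h]
  exact prod_le_prod' fun k _ => by omega

theorem prod_odd_mul_prod_even_le {j r : ℕ} (hj : 1 ≤ j) (hjr : j ≤ r) :
    (∏ k ∈ Icc 1 j, (2 * k - 1)) * ∏ k ∈ Icc j (r - 1), 2 * k ≤ ∏ k ∈ Icc 1 r, (2 * k - 1) := by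
  have hsplit : ∏ k ∈ Icc 1 r, (2 * k - 1) =
      (∏ k ∈ Icc 1 j, (2 * k - 1)) * ∏ k ∈ Icc (j + 1) r, (2 * k - 1) := by
    simp only [← Ico_add_one_right_eq_Icc]
    exact (prod_Ico_consecutive _ (by omega) (by omega)).symm
  rw [hsplit]
  refine Nat.mul_le_mul_left _ ?_
  simpa [show r - 1 + 1 = r by omega] using prod_Icc_two_mul_le j (r - 1)

theorem stmt_3_general (m r : ℕ) :
    min
      (∑ i ∈ Finset.Icc 1 (r + 1),
        (if i = 1 then 0 else
          (∏ k ∈ Finset.Icc 1 (i - 1), (2 * k - 1)) *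
          (∏ k ∈ Finset.Icc (i - 1) (r - 1), (2 * k))) *
        (2 ^ (2 * (i - 1)) * Nat.choose m (2 * (i - 1)) *
          Nat.choose (m - 2 * (i - 1)) (r + 1 - i)))
      ((2 * m - 2 * r) * (Nat.choose (2 * m) (2 * r) - Nat.choose m r))
    ≤ min (∏ k ∈ Finset.Icc 1 r, (2 * k - 1)) (2 * m - 2 * r) *
        Nat.choose (2 * m) (2 * r) := by
  have hF : ∑ i ∈ Icc 1 (r + 1), 2 ^ (2 * (i - 1)) * m.choose (2 * (i - 1)) *
      (m - 2 * (i - 1)).choose (r + 1 - i) = (2 * m).choose (2 * r) := by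
    rw [Nat.choose_two_mul_two_mul_eq_sum, range_eq_Ico, ← Ico_add_one_right_eq_Icc,
      ← sum_Ico_add' _ 0 (r + 1) 1]
    simp only [Nat.Ico_zero_eq_range, add_tsub_cancel_right, Nat.reduceSubDiff]
  have hα : ∀ i ∈ Icc 1 (r + 1), (if i = 1 then 0 else
      (∏ k ∈ Icc 1 (i - 1), (2 * k - 1)) * ∏ k ∈ Icc (i - 1) (r - 1), 2 * k) ≤
      ∏ k ∈ Icc 1 r, (2 * k - 1) := by
    intro i hi
    rw [mem_Icc] at hi
    split_ifs
    · exact Nat.zero_le _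
    · exact prod_odd_mul_prod_even_le (by omega) (by omega)
  have hA : ∑ i ∈ Icc 1 (r + 1), (if i = 1 then 0 else
        (∏ k ∈ Icc 1 (i - 1), (2 * k - 1)) * ∏ k ∈ Icc (i - 1) (r - 1), 2 * k) *
        (2 ^ (2 * (i - 1)) * m.choose (2 * (i - 1)) * (m - 2 * (i - 1)).choose (r + 1 - i)) ≤
      (∏ k ∈ Icc 1 r, (2 * k - 1)) * (2 * m).choose (2 * r) := by
    rw [← hF, mul_sum]
    exact sum_le_sum fun i hi => Nat.mul_le_mul_right _ (hα i hi)
  rw [← min_mul_mul_right]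
  exact min_le_min hA (Nat.mul_le_mul_left _ (Nat.sub_le _ _))

/-- Theorem 1 (order-wise reduction): for `K = 2m`, `t̄ = 2r` with `1 ≤ r`, `2r ≤ m`,
and `t = 2m − 2r`, the PT subpacketization
`F_PT = min{∑_{i=1}^{r+1} α_i F_i , t·(C(2m,2r) − C(m,r))}` satisfies
`F_PT ≤ min{∏_{k=1}^{r}(2k−1), t} · C(2m,2r)`, i.e. `F_PT ≤ F_JCM` and
`F_PT/F_JCM ≤ min{(1/t)∏_{i=1}^{t̄/2}(2i−1), 1}` where `F_JCM = t·C(K,t)`. -/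
theorem stmt_3 (m r : ℕ) (hr : 1 ≤ r) (hm : 2 * r ≤ m) :
    min
      (∑ i ∈ Finset.Icc 1 (r + 1),
        (if i = 1 then 0 else
          (∏ k ∈ Finset.Icc 1 (i - 1), (2 * k - 1)) *
          (∏ k ∈ Finset.Icc (i - 1) (r - 1), (2 * k))) *
        (2 ^ (2 * (i - 1)) * Nat.choose m (2 * (i - 1)) *
          Nat.choose (m - 2 * (i - 1)) (r + 1 - i)))
      ((2 * m - 2 * r) * (Nat.choose (2 * m) (2 * r) - Nat.choose m r))
    ≤ min (∏ k ∈ Finset.Icc 1 r, (2 * k - 1)) (2 * m - 2 * r) *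
        Nat.choose (2 * m) (2 * r) :=
  stmt_3_general m r
end

section
/- Let K ≥ 10 be an even natural number and q = K/2. Then 2 · C(q, 3) · q + 2 · C(q, 2)² = K²(K−2)(5K−14)/96, and as rational numbers, this quantity divided by 4 · C(K, 4) equals K(5K−14) / (16(K−1)(K−3)); moreover K(5K−14)/(16(K−1)(K−3)) ≤ 5/14 for all even K ≥ 10, and it converges to 5/16 as K → ∞. -/
/-!
Writing `K = 2q`, both counts are polynomials in `q`: the subpacketization is
`q²(q-1)(5q-7)/6` and `4·C(K,4) = K(K-1)(K-2)(K-3)/6`, so their quotient cancels to a ratio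
of two quadratics in `K`. That ratio falls short of `5/14` by `(K-10)(5K-12)/(112(K-1)(K-3))`, and
after substituting `t = 1/K` it is a function continuous at `t = 0` with value `5/16`.
-/

open Filter Topology

section Choose

variable {F : Type*} [Field F] [CharZero F]

lemma cast_choose_three (n : ℕ) : (n.choose 3 : F) = n * (n - 1) * (n - 2) / 6 := by
  simp [Nat.cast_choose_eq_descPochhammer_div, descPochhammer_succ_eval, Nat.factorial]

lemma cast_choose_four (n : ℕ) :
    (n.choose 4 : F) = n * (n - 1) * (n - 2) * (n - 3) / 24 := by
  simp [Nat.cast_choose_eq_descPochhammer_div, descPochhammer_succ_eval, Nat.factorial]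

lemma cast_twoGroupSubpacketization (q : ℕ) :
    ((2 * q.choose 3 * q + 2 * q.choose 2 ^ 2 : ℕ) : F) = q ^ 2 * (q - 1) * (5 * q - 7) / 6 := by
  push_cast [cast_choose_three, Nat.cast_choose_two]
  ring

end Choose

lemma twoGroupSubpacketization_mul_ninety_six {K : ℕ} (hK : Even K) :
    96 * (2 * (K / 2).choose 3 * (K / 2) + 2 * (K / 2).choose 2 ^ 2)
      = K ^ 2 * (K - 2) * (5 * K - 14) := by
  obtain ⟨q, rfl⟩ := hK.two_dvd
  rw [Nat.mul_div_cancel_left q two_pos]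
  -- for `q < 2` the subtraction `5 * K - 14` truncates, but both sides vanish
  rcases Nat.lt_or_ge q 2 with hq | hq
  · interval_cases q <;> rfl
  apply Nat.cast_injective (R := ℚ)
  rw [Nat.cast_mul, cast_twoGroupSubpacketization]
  push_cast [Nat.cast_sub (by omega : 2 ≤ 2 * q), Nat.cast_sub (by omega : 14 ≤ 5 * (2 * q))]
  ring

def ptRatio {F : Type*} [Field F] (K : F) : F :=
  K * (5 * K - 14) / (16 * (K - 1) * (K - 3))

lemma twoGroupSubpacketization_div_eq_ptRatio {F : Type*} [Field F] [CharZero F] {K : ℕ}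
    (hK : Even K) (h4 : 4 ≤ K) :
    ((2 * (K / 2).choose 3 * (K / 2) + 2 * (K / 2).choose 2 ^ 2 : ℕ) : F)
      / ((4 * K.choose 4 : ℕ) : F) = ptRatio (K : F) := by
  obtain ⟨q, rfl⟩ := hK.two_dvd
  rw [Nat.mul_div_cancel_left q two_pos, cast_twoGroupSubpacketization, Nat.cast_mul,
    cast_choose_four, ptRatio]
  push_cast
  have hq : (q : F) ≠ 0 := by norm_cast; omega
  have hq1 : (q : F) - 1 ≠ 0 := sub_ne_zero.2 (by norm_cast; omega)
  have hK1 : 2 * (q : F) - 1 ≠ 0 := sub_ne_zero.2 (by norm_cast; omega)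
  have hK3 : 2 * (q : F) - 3 ≠ 0 := sub_ne_zero.2 (by norm_cast; omega)
  rw [show 2 * (q : F) - 2 = 2 * (q - 1) by ring]
  field_simp
  ring

lemma ptRatio_le_five_div_fourteen {x : ℝ} (hx : 10 ≤ x) : ptRatio x ≤ 5 / 14 := by
  rw [ptRatio, div_le_div_iff₀ (by nlinarith) (by norm_num)]
  nlinarith [mul_nonneg (sub_nonneg.2 hx) (by linarith : (0 : ℝ) ≤ 5 * x - 12)]

lemma tendsto_ptRatio_atTop : Tendsto (ptRatio : ℝ → ℝ) atTop (𝓝 (5 / 16)) := by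
  have hg : ContinuousAt (fun t : ℝ => (5 - 14 * t) / (16 * (1 - t) * (1 - 3 * t))) 0 := by
    fun_prop (disch := norm_num)
  have := hg.tendsto.comp tendsto_inv_atTop_zero
  norm_num at this
  refine this.congr' ?_
  filter_upwards [eventually_gt_atTop 3] with x hx
  have hx1 : x - 1 ≠ 0 := by linarith
  have hx3 : x - 3 ≠ 0 := by linarith
  simp only [Function.comp_apply, ptRatio]
  field_simp

/-- PT design for `t = 4` under two-group grouping of even `K ≥ 10` users into two
groups of size `q = K/2`: `2·C(q,3)·q + 2·C(q,2)² = K²(K−2)(5K−14)/96`; dividing by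
`F_JCM = 4·C(K,4)` gives `K(5K−14)/(16(K−1)(K−3))`, which is at most `5/14` for all
even `K ≥ 10` and converges to `5/16` as `K → ∞`. -/
theorem stmt_19 :
    (∀ K : ℕ, Even K → 10 ≤ K →
      2 * Nat.choose (K / 2) 3 * (K / 2) + 2 * Nat.choose (K / 2) 2 ^ 2
          = K ^ 2 * (K - 2) * (5 * K - 14) / 96 ∧
      ((2 * Nat.choose (K / 2) 3 * (K / 2) + 2 * Nat.choose (K / 2) 2 ^ 2 : ℕ) : ℚ) /
          ((4 * Nat.choose K 4 : ℕ) : ℚ)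
        = (K : ℚ) * (5 * (K : ℚ) - 14) / (16 * ((K : ℚ) - 1) * ((K : ℚ) - 3)) ∧
      (K : ℝ) * (5 * (K : ℝ) - 14) / (16 * ((K : ℝ) - 1) * ((K : ℝ) - 3)) ≤ 5 / 14) ∧
    Tendsto
      (fun K : ℕ => (K : ℝ) * (5 * (K : ℝ) - 14) / (16 * ((K : ℝ) - 1) * ((K : ℝ) - 3)))
      atTop (𝓝 (5 / 16)) := by
  refine ⟨fun K hK h10 => ⟨?_, ?_, ?_⟩, tendsto_ptRatio_atTop.comp tendsto_natCast_atTop_atTop⟩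
  · rw [← twoGroupSubpacketization_mul_ninety_six hK, Nat.mul_div_cancel_left _ (by norm_num)]
  · exact twoGroupSubpacketization_div_eq_ptRatio hK (by omega)
  · exact ptRatio_le_five_div_fourteen (by exact_mod_cast h10)
end
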